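/- arXiv:2505.14625 — 3 statements merged into one kernel-verified Lean document; each statement's English description precedes it below -/
import Mathlib

section
/- For every ε > 0 and every p ∈ (0,1), the derivatives of the GRPO advantage weights satisfy p·(ω⁺)′(p) − (1−p)·(ω⁻)′(p) = −(ω⁺(p) + ω⁻(p)). -/
/-- The GRPO advantage weight `ω⁺(p) = (1 - p) / (√(p(1-p)) + ε)`. -/
noncomputable def omegaPlus (ε p : ℝ) : ℝ := (1 - p) / (Real.sqrt (p * (1 - p)) + ε)

/-- The GRPO advantage weight `ω⁻(p) = p / (√(p(1-p)) + ε)`. -/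
noncomputable def omegaMinus (ε p : ℝ) : ℝ := p / (Real.sqrt (p * (1 - p)) + ε)

-- The `D′` terms cancel, so the identity holds for any nonvanishing differentiable denominator.
theorem mul_deriv_one_sub_div_sub_mul_deriv_div {D : ℝ → ℝ} {p : ℝ}
    (hD : DifferentiableAt ℝ D p) (hDp : D p ≠ 0) :
    p * deriv (fun x => (1 - x) / D x) p - (1 - p) * deriv (fun x => x / D x) p
      = -((1 - p) / D p + p / D p) := by
  have hsub : HasDerivAt (fun x => (1 - x) / D x) ((-1 * D p - (1 - p) * deriv D p) / D p ^ 2) p :=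
    ((hasDerivAt_id' p).const_sub 1).div hD.hasDerivAt hDp
  have hid : HasDerivAt (fun x => x / D x) ((1 * D p - p * deriv D p) / D p ^ 2) p :=
    (hasDerivAt_id' p).div hD.hasDerivAt hDp
  rw [hsub.deriv, hid.deriv]
  field_simp
  ring

theorem differentiableAt_sqrt_mul_one_sub {p : ℝ} (hp : p ∈ Set.Ioo (0 : ℝ) 1) :
    DifferentiableAt ℝ (fun x => Real.sqrt (x * (1 - x))) p :=
  (differentiableAt_id.mul (differentiableAt_id.const_sub 1)).sqrt
    (mul_pos hp.1 (sub_pos.2 hp.2)).ne'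

/-- For every `ε > 0` and every `p ∈ (0,1)`, the derivatives of the GRPO advantage
weights satisfy `p·(ω⁺)′(p) − (1−p)·(ω⁻)′(p) = −(ω⁺(p) + ω⁻(p))`. -/
theorem stmt1 (ε : ℝ) (hε : 0 < ε) (p : ℝ) (hp : p ∈ Set.Ioo (0 : ℝ) 1) :
    p * deriv (omegaPlus ε) p - (1 - p) * deriv (omegaMinus ε) p
      = -(omegaPlus ε p + omegaMinus ε p) :=
  mul_deriv_one_sub_div_sub_mul_deriv_div
    ((differentiableAt_sqrt_mul_one_sub hp).add_const ε) (by positivity)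
end

section
/- Fix ε > 0 and a ∈ ℝ. For every b ∈ (0,1), the weighted derivative combination appearing in the analysis of the GRPO learnability function satisfies ω⁺(b) + ω⁻(b) + a·(ω⁺)′(b) − (1−a)·(ω⁻)′(b) = (1−2b)(b−a) / (2√(b(1−b)) · (√(b(1−b)) + ε)²). -/
section GRPOWeights

variable {ε p : ℝ}

lemma hasDerivAt_sqrt_mul_one_sub (hp : p ∈ Set.Ioo (0 : ℝ) 1) :
    HasDerivAt (fun q : ℝ => √(q * (1 - q))) ((1 - 2 * p) / (2 * √(p * (1 - p)))) p := by
  have hpoly : HasDerivAt (fun q : ℝ => q * (1 - q)) (1 - 2 * p) p :=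
    ((hasDerivAt_id' p).fun_mul ((hasDerivAt_id' p).const_sub 1)).congr_deriv (by ring)
  exact hpoly.sqrt (mul_pos hp.1 (sub_pos.2 hp.2)).ne'

lemma sqrt_mul_one_sub_pos (hp : p ∈ Set.Ioo (0 : ℝ) 1) : 0 < √(p * (1 - p)) :=
  Real.sqrt_pos.2 (mul_pos hp.1 (sub_pos.2 hp.2))

lemma sqrt_mul_one_sub_add_pos (hε : 0 ≤ ε) (hp : p ∈ Set.Ioo (0 : ℝ) 1) :
    0 < √(p * (1 - p)) + ε :=
  add_pos_of_pos_of_nonneg (sqrt_mul_one_sub_pos hp) hε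

lemma hasDerivAt_omegaPlus (hε : 0 ≤ ε) (hp : p ∈ Set.Ioo (0 : ℝ) 1) :
    HasDerivAt (omegaPlus ε)
      ((-(√(p * (1 - p)) + ε) - (1 - p) * ((1 - 2 * p) / (2 * √(p * (1 - p)))))
        / (√(p * (1 - p)) + ε) ^ 2) p :=
  (((hasDerivAt_id' p).const_sub 1).fun_div
    ((hasDerivAt_sqrt_mul_one_sub hp).add_const ε) (sqrt_mul_one_sub_add_pos hε hp).ne').congr_deriv
    (by ring)

lemma hasDerivAt_omegaMinus (hε : 0 ≤ ε) (hp : p ∈ Set.Ioo (0 : ℝ) 1) :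
    HasDerivAt (omegaMinus ε)
      ((√(p * (1 - p)) + ε - p * ((1 - 2 * p) / (2 * √(p * (1 - p)))))
        / (√(p * (1 - p)) + ε) ^ 2) p :=
  ((hasDerivAt_id' p).fun_div
    ((hasDerivAt_sqrt_mul_one_sub hp).add_const ε) (sqrt_mul_one_sub_add_pos hε hp).ne').congr_deriv
    (by ring)

end GRPOWeights

/-- Fix `ε > 0` and `a ∈ ℝ`.  For every `b ∈ (0,1)`,
`ω⁺(b) + ω⁻(b) + a·(ω⁺)′(b) − (1−a)·(ω⁻)′(b)
  = (1−2b)(b−a) / (2√(b(1−b)) · (√(b(1−b)) + ε)²)`. -/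
theorem stmt2 (ε : ℝ) (hε : 0 < ε) (a b : ℝ) (hb : b ∈ Set.Ioo (0 : ℝ) 1) :
    omegaPlus ε b + omegaMinus ε b + a * deriv (omegaPlus ε) b
        - (1 - a) * deriv (omegaMinus ε) b
      = (1 - 2 * b) * (b - a)
          / (2 * Real.sqrt (b * (1 - b)) * (Real.sqrt (b * (1 - b)) + ε) ^ 2) := by
  rw [(hasDerivAt_omegaPlus hε.le hb).deriv, (hasDerivAt_omegaMinus hε.le hb).deriv]
  have hs : √(b * (1 - b)) ≠ 0 := (sqrt_mul_one_sub_pos hb).ne'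
  have hsε : √(b * (1 - b)) + ε ≠ 0 := (sqrt_mul_one_sub_add_pos hε.le hb).ne'
  -- After clearing denominators the terms carrying `√(b(1-b)) + ε` cancel, leaving an identity
  -- that holds without using `√(b(1-b))² = b(1-b)`.
  unfold omegaPlus omegaMinus
  field_simp
  ring
end

section
/- Let μ be a probability measure on a measurable space and S a measurable set with μ(S) = P_ref ∈ (0,1). Fix ε > 0, β > 0, and for b ∈ (0,1) let π_b be the probability measure with density exp(u(b)·1_S − v(b)·1_{Sᶜ})/Z(b) with respect to μ. Then for every b ∈ (0,1), with q = π_b(S), one has q ∈ (0,1) and the reverse KL divergence between consecutive GRPO iterates satisfies D_KL(π_b ‖ π_q) = (1/β)·[ω⁺(b)·q − ω⁻(b)·(1−q)] − log(Z(b)/Z(q)). -/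
open MeasureTheory

/-- `u(p) = ω⁺(p)/β`. -/
noncomputable def uFun (ε β p : ℝ) : ℝ := omegaPlus ε p / β

/-- `v(p) = ω⁻(p)/β`. -/
noncomputable def vFun (ε β p : ℝ) : ℝ := omegaMinus ε p / β

/-- The normalizing constant `Z(p) = P_ref·exp(u(p)) + (1 − P_ref)·exp(−v(p))`. -/
noncomputable def ZFun (ε β Pref p : ℝ) : ℝ :=
  Pref * Real.exp (uFun ε β p) + (1 - Pref) * Real.exp (-vFun ε β p)

/-- The exponentially tilted policy `π_b`, with density
`exp(u(b)·1_S − v(b)·1_{Sᶜ}) / Z(b)` with respect to `μ`. -/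
noncomputable def tiltedPolicy {Ω : Type*} [MeasurableSpace Ω] (μ : Measure Ω) (S : Set Ω)
    (ε β Pref b : ℝ) : Measure Ω :=
  μ.withDensity fun x =>
    ENNReal.ofReal
      (Real.exp (uFun ε β b * S.indicator 1 x - vFun ε β b * Sᶜ.indicator 1 x)
        / ZFun ε β Pref b)

/-- The Kullback–Leibler divergence `D_KL(ν ‖ ρ) = ∫ log (dν/dρ) dν`. -/
noncomputable def klDiv {Ω : Type*} [MeasurableSpace Ω] (ν ρ : Measure Ω) : ℝ :=
  ∫ x, Real.log ((ν.rnDeriv ρ x).toReal) ∂ν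

/-!
Both `π_b` and `π_q` have densities with respect to `μ` that are constant on `S` and on `Sᶜ`,
so `log (dπ_b/dπ_q)` takes only two values and its `π_b`-integral is an affine function of
`q = π_b(S)`. The terms coming from `π_q` cancel because `u(q)·q = v(q)·(1 - q)`, i.e. the
GRPO advantage has mean zero under the success probability it is computed from.
-/

lemma klDiv_withDensity_ofReal {α : Type*} [MeasurableSpace α] (μ : Measure α) [SigmaFinite μ]
    {f g : α → ℝ} (hf : Measurable f) (hg : Measurable g) (hf0 : ∀ x, 0 ≤ f x)
    (hg0 : ∀ x, 0 < g x) :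
    klDiv (μ.withDensity fun x => ENNReal.ofReal (f x))
        (μ.withDensity fun x => ENNReal.ofReal (g x))
      = ∫ x, Real.log (f x / g x) ∂(μ.withDensity fun x => ENNReal.ofReal (f x)) := by
  set ν := μ.withDensity fun x => ENNReal.ofReal (g x)
  have hratio : Measurable fun x => ENNReal.ofReal (f x / g x) := (hf.div hg).ennreal_ofReal
  have hfactor : μ.withDensity (fun x => ENNReal.ofReal (f x))
      = ν.withDensity fun x => ENNReal.ofReal (f x / g x) := by
    rw [← withDensity_mul _ hg.ennreal_ofReal hratio]
    congr 1 with x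
    rw [Pi.mul_apply, ← ENNReal.ofReal_mul (hg0 x).le, mul_div_cancel₀ _ (hg0 x).ne']
  have hrn := (Measure.rnDeriv_withDensity ν hratio).filter_mono
    (withDensity_absolutelyContinuous ν fun x => ENNReal.ofReal (f x / g x)).ae_le
  rw [← hfactor] at hrn
  refine integral_congr_ae ?_
  filter_upwards [hrn] with x hx
  rw [hx, ENNReal.toReal_ofReal (div_nonneg (hf0 x) (hg0 x).le)]

lemma ZFun_pos {ε β Pref : ℝ} (hPref : Pref ∈ Set.Ioo (0 : ℝ) 1) (p : ℝ) :
    0 < ZFun ε β Pref p :=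
  add_pos (mul_pos hPref.1 (Real.exp_pos _)) (mul_pos (by linarith [hPref.2]) (Real.exp_pos _))

lemma uFun_mul_self_eq_vFun_mul_one_sub (ε β p : ℝ) :
    uFun ε β p * p = vFun ε β p * (1 - p) := by
  unfold uFun vFun omegaPlus omegaMinus
  ring

noncomputable def tiltedDensity {Ω : Type*} (S : Set Ω) (ε β Pref p : ℝ) (x : Ω) : ℝ :=
  Real.exp (uFun ε β p * S.indicator 1 x - vFun ε β p * Sᶜ.indicator 1 x) / ZFun ε β Pref p

section TiltedPolicy

variable {Ω : Type*} {S : Set Ω} {ε β Pref : ℝ}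

lemma tiltedDensity_of_mem {x : Ω} (hx : x ∈ S) (p : ℝ) :
    tiltedDensity S ε β Pref p x = Real.exp (uFun ε β p) / ZFun ε β Pref p := by
  simp [tiltedDensity, hx]

lemma tiltedDensity_of_notMem {x : Ω} (hx : x ∉ S) (p : ℝ) :
    tiltedDensity S ε β Pref p x = Real.exp (-vFun ε β p) / ZFun ε β Pref p := by
  simp [tiltedDensity, hx]

lemma tiltedDensity_pos (hPref : Pref ∈ Set.Ioo (0 : ℝ) 1) (p : ℝ) (x : Ω) :
    0 < tiltedDensity S ε β Pref p x :=
  div_pos (Real.exp_pos _) (ZFun_pos hPref p)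

lemma log_tiltedDensity (hPref : Pref ∈ Set.Ioo (0 : ℝ) 1) (p : ℝ) (x : Ω) :
    Real.log (tiltedDensity S ε β Pref p x)
      = S.indicator (fun _ => uFun ε β p) x - Sᶜ.indicator (fun _ => vFun ε β p) x
        - Real.log (ZFun ε β Pref p) := by
  have hZ := (ZFun_pos (ε := ε) (β := β) hPref p).ne'
  by_cases hx : x ∈ S
  · simp [tiltedDensity_of_mem hx, hx, Real.log_div (Real.exp_ne_zero _) hZ]
  · simp [tiltedDensity_of_notMem hx, hx, Real.log_div (Real.exp_ne_zero _) hZ]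

variable [MeasurableSpace Ω]

lemma tiltedPolicy_eq_withDensity (μ : Measure Ω) (S : Set Ω) (ε β Pref p : ℝ) :
    tiltedPolicy μ S ε β Pref p
      = μ.withDensity fun x => ENNReal.ofReal (tiltedDensity S ε β Pref p x) :=
  rfl

lemma measurable_tiltedDensity (hS : MeasurableSet S) (p : ℝ) :
    Measurable (tiltedDensity S ε β Pref p) :=
  (((measurable_const.mul (measurable_one.indicator hS)).sub
    (measurable_const.mul (measurable_one.indicator hS.compl))).exp).div_const _

lemma integral_log_tiltedDensity (ν : Measure Ω) [IsProbabilityMeasure ν] (hS : MeasurableSet S)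
    (hPref : Pref ∈ Set.Ioo (0 : ℝ) 1) (p : ℝ) :
    Integrable (fun x => Real.log (tiltedDensity S ε β Pref p x)) ν ∧
      ∫ x, Real.log (tiltedDensity S ε β Pref p x) ∂ν
        = uFun ε β p * ν.real S - vFun ε β p * ν.real Sᶜ - Real.log (ZFun ε β Pref p) := by
  have hu : Integrable (S.indicator fun _ => uFun ε β p) ν :=
    (integrable_const _).indicator hS
  have hv : Integrable (Sᶜ.indicator fun _ => vFun ε β p) ν :=
    (integrable_const _).indicator hS.compl
  simp_rw [log_tiltedDensity hPref]
  refine ⟨(hu.sub hv).sub (integrable_const _), ?_⟩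
  rw [integral_sub ?_ (integrable_const _), integral_sub hu hv,
    integral_indicator_const _ hS, integral_indicator_const _ hS.compl, integral_const,
    probReal_univ, smul_eq_mul, smul_eq_mul, smul_eq_mul, one_mul, mul_comm (ν.real S),
    mul_comm (ν.real Sᶜ)]
  exact hu.sub hv

variable {μ : Measure Ω}

lemma tiltedPolicy_apply_of_forall_mem_eq {T : Set Ω} (hT : MeasurableSet T) {p c : ℝ}
    (hdens : ∀ x ∈ T, tiltedDensity S ε β Pref p x = c) :
    tiltedPolicy μ S ε β Pref p T = ENNReal.ofReal c * μ T := by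
  rw [tiltedPolicy_eq_withDensity, withDensity_apply _ hT,
    setLIntegral_congr_fun hT fun x hx => by rw [hdens x hx], setLIntegral_const]

lemma tiltedPolicy_apply_self (hS : MeasurableSet S) (hPref : Pref ∈ Set.Ioo (0 : ℝ) 1)
    (hμS : μ S = ENNReal.ofReal Pref) (p : ℝ) :
    tiltedPolicy μ S ε β Pref p S
      = ENNReal.ofReal (Real.exp (uFun ε β p) / ZFun ε β Pref p * Pref) := by
  rw [tiltedPolicy_apply_of_forall_mem_eq hS fun x hx => tiltedDensity_of_mem hx p,
    hμS, ← ENNReal.ofReal_mul (div_pos (Real.exp_pos _) (ZFun_pos hPref p)).le]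

variable [IsProbabilityMeasure μ]

lemma tiltedPolicy_apply_compl (hS : MeasurableSet S) (hPref : Pref ∈ Set.Ioo (0 : ℝ) 1)
    (hμS : μ S = ENNReal.ofReal Pref) (p : ℝ) :
    tiltedPolicy μ S ε β Pref p Sᶜ
      = ENNReal.ofReal (Real.exp (-vFun ε β p) / ZFun ε β Pref p * (1 - Pref)) := by
  have hμSc : μ Sᶜ = ENNReal.ofReal (1 - Pref) := by
    rw [prob_compl_eq_one_sub hS, hμS, ← ENNReal.ofReal_one,
      ENNReal.ofReal_sub _ hPref.1.le]
  rw [tiltedPolicy_apply_of_forall_mem_eq hS.compl fun x hx => tiltedDensity_of_notMem hx p,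
    hμSc, ← ENNReal.ofReal_mul (div_pos (Real.exp_pos _) (ZFun_pos hPref p)).le]

lemma isProbabilityMeasure_tiltedPolicy (hS : MeasurableSet S)
    (hPref : Pref ∈ Set.Ioo (0 : ℝ) 1) (hμS : μ S = ENNReal.ofReal Pref) (p : ℝ) :
    IsProbabilityMeasure (tiltedPolicy μ S ε β Pref p) := by
  have hZ := ZFun_pos (ε := ε) (β := β) hPref p
  have hsum : Real.exp (uFun ε β p) / ZFun ε β Pref p * Pref
      + Real.exp (-vFun ε β p) / ZFun ε β Pref p * (1 - Pref) = 1 := by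
    rw [div_mul_eq_mul_div, div_mul_eq_mul_div, ← add_div, div_eq_one_iff_eq hZ.ne', ZFun]
    ring
  constructor
  rw [← measure_add_measure_compl hS, tiltedPolicy_apply_self hS hPref hμS,
    tiltedPolicy_apply_compl hS hPref hμS, ← ENNReal.ofReal_add
      (mul_nonneg (div_pos (Real.exp_pos _) hZ).le hPref.1.le)
      (mul_nonneg (div_pos (Real.exp_pos _) hZ).le (by linarith [hPref.2])),
    hsum, ENNReal.ofReal_one]

lemma tiltedPolicy_real_self_mem_Ioo (hS : MeasurableSet S)
    (hPref : Pref ∈ Set.Ioo (0 : ℝ) 1) (hμS : μ S = ENNReal.ofReal Pref) (p : ℝ) :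
    (tiltedPolicy μ S ε β Pref p).real S ∈ Set.Ioo (0 : ℝ) 1 := by
  have := isProbabilityMeasure_tiltedPolicy (ε := ε) (β := β) hS hPref hμS p
  have hZ := ZFun_pos (ε := ε) (β := β) hPref p
  have hS_pos : 0 < Real.exp (uFun ε β p) / ZFun ε β Pref p * Pref :=
    mul_pos (div_pos (Real.exp_pos _) hZ) hPref.1
  have hSc_pos : 0 < Real.exp (-vFun ε β p) / ZFun ε β Pref p * (1 - Pref) :=
    mul_pos (div_pos (Real.exp_pos _) hZ) (by linarith [hPref.2])
  have hSc : 0 < (tiltedPolicy μ S ε β Pref p).real Sᶜ := by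
    rwa [measureReal_def, tiltedPolicy_apply_compl hS hPref hμS, ENNReal.toReal_ofReal hSc_pos.le]
  rw [probReal_compl_eq_one_sub hS] at hSc
  refine ⟨?_, by linarith⟩
  rwa [measureReal_def, tiltedPolicy_apply_self hS hPref hμS, ENNReal.toReal_ofReal hS_pos.le]

lemma klDiv_tiltedPolicy (hS : MeasurableSet S) (hPref : Pref ∈ Set.Ioo (0 : ℝ) 1)
    (hμS : μ S = ENNReal.ofReal Pref) (b p : ℝ) :
    klDiv (tiltedPolicy μ S ε β Pref b) (tiltedPolicy μ S ε β Pref p)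
      = uFun ε β b * (tiltedPolicy μ S ε β Pref b).real S
          - vFun ε β b * (tiltedPolicy μ S ε β Pref b).real Sᶜ - Real.log (ZFun ε β Pref b)
        - (uFun ε β p * (tiltedPolicy μ S ε β Pref b).real S
          - vFun ε β p * (tiltedPolicy μ S ε β Pref b).real Sᶜ - Real.log (ZFun ε β Pref p)) := by
  have := isProbabilityMeasure_tiltedPolicy (ε := ε) (β := β) hS hPref hμS b
  obtain ⟨hintb, hb_eq⟩ :=
    integral_log_tiltedDensity (ε := ε) (β := β) (tiltedPolicy μ S ε β Pref b) hS hPref b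
  obtain ⟨hintp, hp_eq⟩ :=
    integral_log_tiltedDensity (ε := ε) (β := β) (tiltedPolicy μ S ε β Pref b) hS hPref p
  have hlog_ratio : ∀ x, Real.log (tiltedDensity S ε β Pref b x / tiltedDensity S ε β Pref p x)
      = Real.log (tiltedDensity S ε β Pref b x) - Real.log (tiltedDensity S ε β Pref p x) :=
    fun x => Real.log_div (tiltedDensity_pos hPref b x).ne' (tiltedDensity_pos hPref p x).ne'
  rw [tiltedPolicy_eq_withDensity μ S ε β Pref p, tiltedPolicy_eq_withDensity μ S ε β Pref b,
    klDiv_withDensity_ofReal μ (measurable_tiltedDensity hS b) (measurable_tiltedDensity hS p)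
      (fun x => (tiltedDensity_pos hPref b x).le) (tiltedDensity_pos hPref p),
    ← tiltedPolicy_eq_withDensity, funext hlog_ratio, integral_sub hintb hintp, hb_eq, hp_eq]

end TiltedPolicy

theorem stmt5_general {Ω : Type*} [MeasurableSpace Ω] (μ : Measure Ω) [IsProbabilityMeasure μ]
    (S : Set Ω) (hS : MeasurableSet S) (Pref : ℝ) (hPref : Pref ∈ Set.Ioo (0 : ℝ) 1)
    (hμS : μ S = ENNReal.ofReal Pref)
    (ε β : ℝ)
    (b : ℝ)
    (q : ℝ) (hq : q = (tiltedPolicy μ S ε β Pref b S).toReal) :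
    q ∈ Set.Ioo (0 : ℝ) 1 ∧
      klDiv (tiltedPolicy μ S ε β Pref b) (tiltedPolicy μ S ε β Pref q)
        = (1 / β) * (omegaPlus ε b * q - omegaMinus ε b * (1 - q))
          - Real.log (ZFun ε β Pref b / ZFun ε β Pref q) := by
  have := isProbabilityMeasure_tiltedPolicy (ε := ε) (β := β) hS hPref hμS b
  have hqS : (tiltedPolicy μ S ε β Pref b).real S = q := hq.symm
  have hqSc : (tiltedPolicy μ S ε β Pref b).real Sᶜ = 1 - q := by
    rw [probReal_compl_eq_one_sub hS, hqS]
  refine ⟨hqS ▸ tiltedPolicy_real_self_mem_Ioo hS hPref hμS b, ?_⟩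
  rw [klDiv_tiltedPolicy hS hPref hμS, hqS, hqSc,
    Real.log_div (ZFun_pos hPref b).ne' (ZFun_pos hPref q).ne',
    uFun_mul_self_eq_vFun_mul_one_sub, uFun, vFun]
  ring

/-- For every `b ∈ (0,1)`, with `q = π_b(S)`, one has `q ∈ (0,1)` and the reverse KL
divergence between consecutive GRPO iterates satisfies
`D_KL(π_b ‖ π_q) = (1/β)·[ω⁺(b)·q − ω⁻(b)·(1−q)] − log(Z(b)/Z(q))`. -/
theorem stmt5 {Ω : Type*} [MeasurableSpace Ω] (μ : Measure Ω) [IsProbabilityMeasure μ]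
    (S : Set Ω) (hS : MeasurableSet S) (Pref : ℝ) (hPref : Pref ∈ Set.Ioo (0 : ℝ) 1)
    (hμS : μ S = ENNReal.ofReal Pref)
    (ε β : ℝ) (hε : 0 < ε) (hβ : 0 < β)
    (b : ℝ) (hb : b ∈ Set.Ioo (0 : ℝ) 1)
    (q : ℝ) (hq : q = (tiltedPolicy μ S ε β Pref b S).toReal) :
    q ∈ Set.Ioo (0 : ℝ) 1 ∧
      klDiv (tiltedPolicy μ S ε β Pref b) (tiltedPolicy μ S ε β Pref q)
        = (1 / β) * (omegaPlus ε b * q - omegaMinus ε b * (1 - q))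
          - Real.log (ZFun ε β Pref b / ZFun ε β Pref q) :=
  stmt5_general μ S hS Pref hPref hμS ε β b q hq
end
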